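/- Let Σ̂ ∈ ℝ^{p×p} be symmetric positive definite, let A ∈ ℝ^{q×p} have full row rank q < p with AΣ̂⁻¹Aᵀ invertible, and let V ∈ ℝ^{p×(p−q)} have orthonormal columns spanning the null space of A. Then Tr(C_{A⊥}Σ̂⁻¹) = Tr((VᵀΣ̂V)⁻¹), where C_{A⊥} := I_p − Σ̂⁻¹Aᵀ(AΣ̂⁻¹Aᵀ)⁻¹A. -/

import Mathlib

/-!
Both `C_{A⊥} = I - Σ̂⁻¹Aᵀ(AΣ̂⁻¹Aᵀ)⁻¹A` and `V(VᵀΣ̂V)⁻¹VᵀΣ̂` are projections onto `ker A` along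
the range of `Σ̂⁻¹Aᵀ`, hence equal; so `C_{A⊥}Σ̂⁻¹ = V(VᵀΣ̂V)⁻¹Vᵀ`, whose trace is
`Tr((VᵀΣ̂V)⁻¹VᵀV) = Tr((VᵀΣ̂V)⁻¹)`.
-/

open Matrix

namespace Matrix

variable {R : Type*} [CommRing R] {k l m n : Type*}

theorem exists_mul_eq_of_mul_eq_zero [Fintype l] [Fintype n] {A : Matrix m n R}
    {V : Matrix n l R} {C : Matrix n k R} (hAC : A * C = 0)
    (hker : {β | A *ᵥ β = 0} ⊆ Set.range (V *ᵥ ·)) :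
    ∃ X : Matrix l k R, V * X = C := by
  have hcol (j : k) : ∃ α, V *ᵥ α = C.col j := hker <| funext fun i => by
    simpa [mulVec, dotProduct, mul_apply] using congrFun (congrFun hAC i) j
  choose α hα using hcol
  refine ⟨(of α)ᵀ, ext fun i j => ?_⟩
  rw [mul_apply]
  simpa [mulVec, dotProduct] using congrFun (hα j) i

theorem trace_mul_mul_transpose_of_transpose_mul_self_eq_one [Fintype l] [Fintype n]
    [DecidableEq l] {V : Matrix n l R} (hV : Vᵀ * V = 1) (M : Matrix l l R) : trace (V * M * Vᵀ) = trace M := by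
  rw [trace_mul_comm, ← Matrix.mul_assoc, hV, Matrix.one_mul]

variable [Fintype l] [Fintype m] [Fintype n] [DecidableEq l] [DecidableEq m] [DecidableEq n]

theorem mul_inv_mul_transpose_mul_eq_one_sub {S : Matrix n n R} {A : Matrix m n R}
    {V : Matrix n l R} (hS : IsUnit S.det) (hASA : IsUnit (A * S⁻¹ * Aᵀ).det)
    (hVSV : IsUnit (Vᵀ * S * V).det) (hAV : A * V = 0)
    (hker : {β | A *ᵥ β = 0} ⊆ Set.range (V *ᵥ ·)) :
    V * (Vᵀ * S * V)⁻¹ * Vᵀ * S = 1 - S⁻¹ * Aᵀ * (A * S⁻¹ * Aᵀ)⁻¹ * A := by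
  set H := A * S⁻¹ * Aᵀ
  set G := Vᵀ * S * V
  set P := V * G⁻¹ * Vᵀ * S
  set Q := S⁻¹ * Aᵀ * H⁻¹ * A
  have hAQ : A * Q = A := by
    rw [show A * Q = H * H⁻¹ * A by simp only [Q, H, Matrix.mul_assoc], mul_nonsing_inv _ hASA,
      Matrix.one_mul]
  have hAC : A * (1 - Q) = 0 := by rw [Matrix.mul_sub, hAQ, Matrix.mul_one, sub_self]
  obtain ⟨X, hX⟩ := exists_mul_eq_of_mul_eq_zero hAC hker
  have hPV : P * V = V := by
    rw [show P * V = V * (G⁻¹ * G) by simp only [P, G, Matrix.mul_assoc], nonsing_inv_mul _ hVSV,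
      Matrix.mul_one]
  have hPQ : P * Q = 0 := by
    rw [show P * Q = V * G⁻¹ * (A * V)ᵀ * H⁻¹ * A by
        simp only [P, Q, G, transpose_mul, Matrix.mul_assoc, mul_nonsing_inv_cancel_left _ _ hS],
      hAV, transpose_zero, Matrix.mul_zero, Matrix.zero_mul, Matrix.zero_mul]
  calc P = P * ((1 - Q) + Q) := by rw [sub_add_cancel, Matrix.mul_one]
    _ = 1 - Q := by rw [Matrix.mul_add, hPQ, add_zero, ← hX, ← Matrix.mul_assoc, hPV]

end Matrix

theorem stmt4_general {p q : ℕ}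
    (S : Matrix (Fin p) (Fin p) ℝ) (hS : S.PosDef)
    (A : Matrix (Fin q) (Fin p) ℝ)
    (hASA : IsUnit (A * S⁻¹ * Aᵀ).det)
    (V : Matrix (Fin p) (Fin (p - q)) ℝ) (hV : Vᵀ * V = 1)
    (hVspan : Set.range (fun α : Fin (p - q) → ℝ => V *ᵥ α) = {β | A *ᵥ β = 0}) :
    Matrix.trace
        (((1 : Matrix (Fin p) (Fin p) ℝ) - S⁻¹ * Aᵀ * (A * S⁻¹ * Aᵀ)⁻¹ * A) * S⁻¹) =
      Matrix.trace (Vᵀ * S * V)⁻¹ := by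
  have hSdet : IsUnit S.det := hS.det_pos.ne'.isUnit
  have hAV : A * V = 0 := ext_of_mulVec_single fun j => by
    rw [← mulVec_mulVec, zero_mulVec]
    exact hVspan.subset ⟨_, rfl⟩
  have hVinj : Function.Injective V.mulVec :=
    Function.LeftInverse.injective (g := (Vᵀ *ᵥ ·)) fun x => by
      dsimp only
      rw [mulVec_mulVec, hV, one_mulVec]
  have hVSV : (Vᵀ * S * V).PosDef := by
    simpa only [conjTranspose_eq_transpose_of_trivial] using hS.conjTranspose_mul_mul_same hVinj
  rw [← mul_inv_mul_transpose_mul_eq_one_sub hSdet hASA hVSV.det_pos.ne'.isUnit hAV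
      hVspan.superset, Matrix.mul_assoc, mul_nonsing_inv _ hSdet, Matrix.mul_one,
    trace_mul_mul_transpose_of_transpose_mul_self_eq_one hV]

/-- For symmetric positive definite `Σ̂`, full row rank `A` with
`AΣ̂⁻¹Aᵀ` invertible, and `V` with orthonormal columns spanning the null space of `A`,
`Tr(C_{A⊥}Σ̂⁻¹) = Tr((VᵀΣ̂V)⁻¹)` where `C_{A⊥} = I − Σ̂⁻¹Aᵀ(AΣ̂⁻¹Aᵀ)⁻¹A`. -/
theorem stmt4 {p q : ℕ} (hqp : q < p)
    (S : Matrix (Fin p) (Fin p) ℝ) (hS : S.PosDef)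
    (A : Matrix (Fin q) (Fin p) ℝ) (hA : A.rank = q)
    (hASA : IsUnit (A * S⁻¹ * Aᵀ).det)
    (V : Matrix (Fin p) (Fin (p - q)) ℝ) (hV : Vᵀ * V = 1)
    (hVspan : Set.range (fun α : Fin (p - q) → ℝ => V *ᵥ α) = {β | A *ᵥ β = 0}) :
    Matrix.trace
        (((1 : Matrix (Fin p) (Fin p) ℝ) - S⁻¹ * Aᵀ * (A * S⁻¹ * Aᵀ)⁻¹ * A) * S⁻¹) =
      Matrix.trace (Vᵀ * S * V)⁻¹ :=
  stmt4_general S hS A hASA V hV hVspan
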